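/- There is no translation function trans from LPODs to extended logic programs over the same literal vocabulary (without introducing new atoms) such that for every LPOD P, the preferred answer sets of P coincide exactly with the answer sets of trans(P). -/

import Mathlib

namespace LPOD

/-- An LPOD rule `C₁ × … × Cₙ ← A₁,…,Aₘ, not B₁,…, not Bₖ`:
`head` is the ordered list of choices, `pos` the positive body literals,
`neg` the default-negated body literals. -/
structure Rule (L : Type) where
  head : List L
  pos  : List L
  neg  : List L

/-- `S` satisfies the body of `r`. -/
def bodySat {L : Type} (S : Set L) (r : Rule L) : Prop :=
  (∀ a ∈ r.pos, a ∈ S) ∧ (∀ b ∈ r.neg, b ∉ S)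

/-- `S` satisfies rule `r` to degree `d` (1-based): degree 1 if the body fails,
otherwise the minimal index of a head choice belonging to `S`. -/
def satDeg {L : Type} (S : Set L) (r : Rule L) (d : ℕ) : Prop :=
  (¬ bodySat S r ∧ d = 1) ∨
  (bodySat S r ∧ 1 ≤ d ∧
    (∃ c, r.head[d - 1]? = some c ∧ c ∈ S) ∧
    (∀ i < d - 1, ∀ c, r.head[i]? = some c → c ∉ S))

/-- The `k`-th option (1-based) of rule `r`:
`Cₖ ← body, not C₁, …, not C_{k−1}`. -/
def ruleOption {L : Type} (r : Rule L) (k : ℕ) : Rule L :=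
  { head := (r.head[k - 1]?).toList
    pos  := r.pos
    neg  := r.neg ++ r.head.take (k - 1) }

/-- `P'` is a split program of `P`: each rule of `P` is replaced by one of its options. -/
def isSplit {L : Type} (P P' : List (Rule L)) : Prop :=
  P'.length = P.length ∧
  ∀ i r, P[(i : ℕ)]? = some r →
    ∃ k, 1 ≤ k ∧ k ≤ r.head.length ∧ P'[i]? = some (ruleOption r k)

/-- `T` is closed under the `S`-reduct of `P` (Gelfond–Lifschitz). -/
def reductClosed {L : Type} (P : List (Rule L)) (S T : Set L) : Prop :=
  ∀ r ∈ P, (∀ b ∈ r.neg, b ∉ S) → (∀ a ∈ r.pos, a ∈ T) → ∃ c ∈ r.head, c ∈ T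

/-- Literals are `(true, a)` (the atom `a`) and `(false, a)` (its strong negation `¬a`). -/
def consistent {A : Type} (S : Set (Bool × A)) : Prop :=
  ¬ ∃ a, (true, a) ∈ S ∧ (false, a) ∈ S

/-- Logically closed: consistent, or the set of all literals. -/
def logClosed {A : Type} (S : Set (Bool × A)) : Prop :=
  consistent S ∨ S = Set.univ

/-- `S` is an answer set of the ordered-disjunction-free program `P`:
a minimal logically closed set closed under the `S`-reduct of `P`. -/
def answerSet {A : Type} (P : List (Rule (Bool × A))) (S : Set (Bool × A)) : Prop :=
  logClosed S ∧ reductClosed P S S ∧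
  ∀ T, T ⊆ S → logClosed T → reductClosed P S T → T = S

/-- `S` is an answer set of the LPOD `P`: a consistent answer set of some split program. -/
def lpodAS {A : Type} (P : List (Rule (Bool × A))) (S : Set (Bool × A)) : Prop :=
  ∃ P', isSplit P P' ∧ answerSet P' S ∧ consistent S

/-- `Sⁱ(P)`: the rules of `P` satisfied by `S` to degree `i`. -/
def degSet {L : Type} (S : Set L) (P : List (Rule L)) (i : ℕ) : Set (Rule L) :=
  {r | r ∈ P ∧ satDeg S r i}

/-- `S₁ > S₂`: for some degree `i`, `S₂ⁱ(P) ⊊ S₁ⁱ(P)` and `S₁ʲ(P) = S₂ʲ(P)` for all `j < i`. -/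
def pref {L : Type} (P : List (Rule L)) (S₁ S₂ : Set L) : Prop :=
  ∃ i, 1 ≤ i ∧ degSet S₂ P i ⊂ degSet S₁ P i ∧
    ∀ j < i, degSet S₁ P j = degSet S₂ P j

/-- Preferred answer sets: answer sets not beaten by any answer set. -/
def preferredAS {A : Type} (P : List (Rule (Bool × A))) (S : Set (Bool × A)) : Prop :=
  lpodAS P S ∧ ¬ ∃ S', lpodAS P S' ∧ pref P S' S

end LPOD

open LPOD

/-!
Answer sets of an extended logic program are subset-minimal, so it suffices to exhibit an LPOD
with two preferred answer sets `S₁ ⊊ S₂`. In Brewka's program `a × b.  c × b ← a.  ¬c.`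
(with `a, b, c = x, y, z`) the fact `¬c` rules out the split choosing `a` and `c`, and the other
three splits have the answer sets `{b, ¬c}` and `{a, b, ¬c}`. Neither beats the other at degree 1:
`{b, ¬c}` satisfies the second rule vacuously, and `{a, b, ¬c}` satisfies the first rule by `a`.
-/

namespace LPOD

variable {L A : Type}

theorem isSplit_iff_forall₂ {P P' : List (Rule L)} :
    isSplit P P' ↔
      List.Forall₂ (fun r r' => ∃ k, 1 ≤ k ∧ k ≤ r.head.length ∧ r' = ruleOption r k) P P' := by
  induction P generalizing P' with
  | nil => cases P' <;> simp [isSplit]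
  | cons r P ih =>
    cases P' with
    | nil => simp [isSplit]
    | cons r' P' =>
      rw [List.forall₂_cons, ← ih]
      simp only [isSplit, List.length_cons, add_left_inj]
      constructor
      · rintro ⟨hlen, h⟩
        obtain ⟨k, hk⟩ := h 0 r rfl
        refine ⟨⟨k, by simpa [eq_comm] using hk⟩, hlen, fun i s hs => ?_⟩
        simpa using h (i + 1) s hs
      · rintro ⟨⟨k, hk₁, hk₂, rfl⟩, hlen, h⟩
        refine ⟨hlen, fun i s hs => ?_⟩
        cases i with
        | zero => cases hs; exact ⟨k, hk₁, hk₂, rfl⟩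
        | succ i => simpa using h i s hs

theorem reductClosed.head_mem {P : List (Rule L)} {S T : Set L} {c : L}
    (h : reductClosed P S T) (r : Rule L) (hr : r ∈ P) (hhead : r.head = [c])
    (hneg : ∀ b ∈ r.neg, b ∉ S) (hpos : ∀ a ∈ r.pos, a ∈ T) : c ∈ T := by
  obtain ⟨c', hc', hc'T⟩ := h r hr hneg hpos
  rw [hhead, List.mem_singleton] at hc'
  rwa [← hc']

theorem consistent.mono {S T : Set (Bool × A)} (hS : consistent S) (hTS : T ⊆ S) :
    consistent T :=
  fun ⟨a, ha, hna⟩ => hS ⟨a, hTS ha, hTS hna⟩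

theorem answerSet.eq_of_subset {P : List (Rule (Bool × A))} {S T : Set (Bool × A)}
    (hT : answerSet P T) (hS : answerSet P S) (hTS : T ⊆ S) : T = S :=
  hS.2.2 T hTS hT.1 fun r hr hneg hpos =>
    hT.2.1 r hr (fun b hb hbT => hneg b hb (hTS hbT)) hpos

theorem answerSet.subset_heads {P : List (Rule (Bool × A))} {S : Set (Bool × A)}
    (hS : answerSet P S) (hcons : consistent S) : S ⊆ {l | ∃ r ∈ P, l ∈ r.head} := by
  have hclosed : reductClosed P S (S ∩ {l | ∃ r ∈ P, l ∈ r.head}) := by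
    intro r hr hneg hpos
    obtain ⟨c, hc, hcS⟩ := hS.2.1 r hr hneg fun a ha => (hpos a ha).1
    exact ⟨c, hc, hcS, r, hr, hc⟩
  rw [← hS.2.2 _ Set.inter_subset_left (Or.inl (hcons.mono Set.inter_subset_left)) hclosed]
  exact Set.inter_subset_right

theorem not_forall_preferredAS_iff_answerSet {P Q : List (Rule (Bool × A))}
    {S S' : Set (Bool × A)} (hS : preferredAS P S) (hS' : preferredAS P S') (hlt : S ⊂ S') :
    ¬ ∀ T, preferredAS P T ↔ answerSet Q T := fun h =>
  hlt.ne (((h S).1 hS).eq_of_subset ((h S').1 hS') hlt.subset)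

theorem satDeg_one_iff {S : Set L} {r : Rule L} :
    satDeg S r 1 ↔ (bodySat S r → ∃ c ∈ r.head.head?, c ∈ S) := by
  by_cases h : bodySat S r <;> simp [satDeg, h, List.head?_eq_getElem?]

theorem pref.degSet_one_subset {P : List (Rule L)} {S S' : Set L}
    (h : pref P S' S) : degSet S P 1 ⊆ degSet S' P 1 := by
  obtain ⟨i, hi, hsub, heq⟩ := h
  rcases hi.eq_or_lt with rfl | hlt
  · exact hsub.subset
  · exact (heq 1 hlt).ge

theorem pref_irrefl (P : List (Rule L)) (S : Set L) : ¬ pref P S S :=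
  fun ⟨_, _, hsub, _⟩ => hsub.ne rfl

section Example

variable {x y z : A}

variable (x y z) in
def exampleLPOD : List (Rule (Bool × A)) :=
  [⟨[(true, x), (true, y)], [], []⟩, ⟨[(true, z), (true, y)], [(true, x)], []⟩,
    ⟨[(false, z)], [], []⟩]

variable (y z) in
def smallAS : Set (Bool × A) := {(true, y), (false, z)}

variable (x y z) in
def largeAS : Set (Bool × A) := {(true, x), (true, y), (false, z)}

theorem consistent_smallAS (hyz : y ≠ z) : consistent (smallAS y z) := by
  simp [consistent, smallAS, hyz]

theorem consistent_largeAS (hyz : y ≠ z) (hxz : x ≠ z) : consistent (largeAS x y z) := by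
  simp [consistent, largeAS, hyz.symm, hxz.symm]

theorem lpodAS_smallAS (hxy : x ≠ y) (hyz : y ≠ z) :
    lpodAS (exampleLPOD x y z) (smallAS y z) := by
  refine ⟨(exampleLPOD x y z).zipWith ruleOption [2, 1, 1], isSplit_iff_forall₂.2 ?_,
    ⟨Or.inl (consistent_smallAS hyz), ?_, ?_⟩, consistent_smallAS hyz⟩
  · simp only [exampleLPOD, List.zipWith_cons_cons, List.zipWith_nil_left, List.forall₂_cons,
      List.forall₂_nil_left_iff, and_true]
    exact ⟨⟨2, by simp, by simp, rfl⟩, ⟨1, le_rfl, by simp, rfl⟩,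
      ⟨1, le_rfl, le_rfl, rfl⟩⟩
  · simp [exampleLPOD, ruleOption, reductClosed, smallAS, hxy]
  · intro T hT _ hTclosed
    have hy : (true, y) ∈ T := hTclosed.head_mem ⟨[(true, y)], [], [(true, x)]⟩
      (by simp [exampleLPOD, ruleOption]) rfl (by simp [smallAS, hxy]) (by simp)
    have hnz : (false, z) ∈ T := hTclosed.head_mem ⟨[(false, z)], [], []⟩
      (by simp [exampleLPOD, ruleOption]) rfl (by simp) (by simp)
    exact subset_antisymm hT (by simp [smallAS, Set.insert_subset_iff, hy, hnz])

theorem lpodAS_largeAS (hyz : y ≠ z) (hxz : x ≠ z) :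
    lpodAS (exampleLPOD x y z) (largeAS x y z) := by
  refine ⟨(exampleLPOD x y z).zipWith ruleOption [1, 2, 1], isSplit_iff_forall₂.2 ?_,
    ⟨Or.inl (consistent_largeAS hyz hxz), ?_, ?_⟩, consistent_largeAS hyz hxz⟩
  · simp only [exampleLPOD, List.zipWith_cons_cons, List.zipWith_nil_left, List.forall₂_cons,
      List.forall₂_nil_left_iff, and_true]
    exact ⟨⟨1, le_rfl, by simp, rfl⟩, ⟨2, by simp, by simp, rfl⟩,
      ⟨1, le_rfl, le_rfl, rfl⟩⟩
  · simp [exampleLPOD, ruleOption, reductClosed, largeAS]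
  · intro T hT _ hTclosed
    have hx : (true, x) ∈ T := hTclosed.head_mem ⟨[(true, x)], [], []⟩
      (by simp [exampleLPOD, ruleOption]) rfl (by simp) (by simp)
    have hy : (true, y) ∈ T := hTclosed.head_mem ⟨[(true, y)], [(true, x)], [(true, z)]⟩
      (by simp [exampleLPOD, ruleOption]) rfl (by simp [largeAS, hyz.symm, hxz.symm])
      (by simpa using hx)
    have hnz : (false, z) ∈ T := hTclosed.head_mem ⟨[(false, z)], [], []⟩
      (by simp [exampleLPOD, ruleOption]) rfl (by simp) (by simp)
    exact subset_antisymm hT (by simp [largeAS, Set.insert_subset_iff, hx, hy, hnz])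

theorem eq_smallAS_or_eq_largeAS_of_lpodAS (hxy : x ≠ y) (hyz : y ≠ z) (hxz : x ≠ z)
    {S : Set (Bool × A)} (h : lpodAS (exampleLPOD x y z) S) :
    S = smallAS y z ∨ S = largeAS x y z := by
  obtain ⟨P', hsplit, hS, hcons⟩ := h
  simp only [isSplit_iff_forall₂, exampleLPOD, List.forall₂_cons_left_iff,
    List.forall₂_nil_left_iff, List.length_cons, List.length_nil, ↓existsAndEq, exists_and_left,
    and_true, true_and] at hsplit
  obtain ⟨k₁, ⟨hk₁, hk₁'⟩, k₂, k₃, ⟨⟨hk₂, hk₂'⟩, hk₃, hk₃'⟩, rfl⟩ := hsplit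
  obtain rfl : k₃ = 1 := by omega
  have hclosed := hS.2.1
  have hnz : (false, z) ∈ S :=
    hclosed.head_mem ⟨[(false, z)], [], []⟩ (by simp [ruleOption]) rfl (by simp) (by simp)
  have hz : (true, z) ∉ S := fun hz => hcons ⟨z, hz, hnz⟩
  interval_cases k₁ <;> interval_cases k₂
  · have hx : (true, x) ∈ S :=
      hclosed.head_mem ⟨[(true, x)], [], []⟩ (by simp [ruleOption]) rfl (by simp) (by simp)
    exact absurd (hclosed.head_mem ⟨[(true, z)], [(true, x)], []⟩ (by simp [ruleOption]) rfl
      (by simp) (by simpa using hx)) hz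
  · have hx : (true, x) ∈ S :=
      hclosed.head_mem ⟨[(true, x)], [], []⟩ (by simp [ruleOption]) rfl (by simp) (by simp)
    have hy : (true, y) ∈ S := hclosed.head_mem ⟨[(true, y)], [(true, x)], [(true, z)]⟩
      (by simp [ruleOption]) rfl (by simpa using hz) (by simpa using hx)
    refine Or.inr (hS.2.2 _ ?_ (Or.inl (consistent_largeAS hyz hxz)) ?_).symm
    · simp [largeAS, Set.insert_subset_iff, hx, hy, hnz]
    · simp [ruleOption, reductClosed, largeAS]
  -- in the remaining two splits no rule has head `x`
  all_goals
    have hx : (true, x) ∉ S := fun hx => by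
      simpa [ruleOption, hxy, hxz] using hS.subset_heads hcons hx
    have hy : (true, y) ∈ S := hclosed.head_mem ⟨[(true, y)], [], [(true, x)]⟩
      (by simp [ruleOption]) rfl (by simpa using hx) (by simp)
    refine Or.inl (hS.2.2 _ ?_ (Or.inl (consistent_smallAS hyz)) ?_).symm
    · simp [smallAS, Set.insert_subset_iff, hy, hnz]
    · simp [ruleOption, reductClosed, smallAS, hxy]

theorem smallAS_ssubset_largeAS (hxy : x ≠ y) : smallAS y z ⊂ largeAS x y z := by
  refine Set.ssubset_iff_of_subset (by simp [smallAS, largeAS]) |>.2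
    ⟨(true, x), by simp [largeAS], by simp [smallAS, hxy]⟩

theorem not_pref_largeAS_smallAS (hxy : x ≠ y) (hyz : y ≠ z) (hxz : x ≠ z) :
    ¬ pref (exampleLPOD x y z) (largeAS x y z) (smallAS y z) := by
  intro h
  have hmem : (⟨[(true, z), (true, y)], [(true, x)], []⟩ : Rule (Bool × A)) ∈
      degSet (smallAS y z) (exampleLPOD x y z) 1 := by
    simp [degSet, exampleLPOD, satDeg_one_iff, bodySat, smallAS, hxy]
  have := (h.degSet_one_subset hmem).2
  simp [satDeg_one_iff, bodySat, largeAS, hyz.symm, hxz.symm] at this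

theorem not_pref_smallAS_largeAS (hxy : x ≠ y) :
    ¬ pref (exampleLPOD x y z) (smallAS y z) (largeAS x y z) := by
  intro h
  have hmem : (⟨[(true, x), (true, y)], [], []⟩ : Rule (Bool × A)) ∈
      degSet (largeAS x y z) (exampleLPOD x y z) 1 := by
    simp [degSet, exampleLPOD, satDeg_one_iff, bodySat, largeAS]
  have := (h.degSet_one_subset hmem).2
  simp [satDeg_one_iff, bodySat, smallAS, hxy] at this

theorem preferredAS_smallAS (hxy : x ≠ y) (hyz : y ≠ z) (hxz : x ≠ z) :
    preferredAS (exampleLPOD x y z) (smallAS y z) := by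
  refine ⟨lpodAS_smallAS hxy hyz, fun ⟨S, hS, hpref⟩ => ?_⟩
  rcases eq_smallAS_or_eq_largeAS_of_lpodAS hxy hyz hxz hS with rfl | rfl
  · exact pref_irrefl _ _ hpref
  · exact not_pref_largeAS_smallAS hxy hyz hxz hpref

theorem preferredAS_largeAS (hxy : x ≠ y) (hyz : y ≠ z) (hxz : x ≠ z) :
    preferredAS (exampleLPOD x y z) (largeAS x y z) := by
  refine ⟨lpodAS_largeAS hyz hxz, fun ⟨S, hS, hpref⟩ => ?_⟩
  rcases eq_smallAS_or_eq_largeAS_of_lpodAS hxy hyz hxz hS with rfl | rfl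
  · exact not_pref_smallAS_largeAS hxy hpref
  · exact pref_irrefl _ _ hpref

end Example

end LPOD

/-- there is no translation from LPODs to extended logic programs
over the same literal vocabulary (no new atoms) such that for every LPOD the
preferred answer sets coincide exactly with the answer sets of the translation. -/
theorem no_translation (A : Type) (x y z : A)
    (hxy : x ≠ y) (hyz : y ≠ z) (hxz : x ≠ z) :
    ¬ ∃ trans : List (Rule (Bool × A)) → List (Rule (Bool × A)),
      (∀ P r, r ∈ trans P → r.head.length = 1) ∧
      (∀ P (S : Set (Bool × A)), preferredAS P S ↔ answerSet (trans P) S) := by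
  rintro ⟨trans, -, htrans⟩
  exact not_forall_preferredAS_iff_answerSet (preferredAS_smallAS hxy hyz hxz)
    (preferredAS_largeAS hxy hyz hxz) (smallAS_ssubset_largeAS hxy) (htrans _)
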